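/- There is a universal constant ε₀ > 0 such that the following holds. Let 0 < ε ≤ ε₀ with εN an integer, and let constants satisfy c₁ ≥ 1, c₂ ≥ 1, c₃ ≥ 5c₁, and c₄ ≥ max(100, 6c₃, 50c₁). Assume the concentration condition with constant c₁ and the stability implication with constants c₂, c₄. Then every first-order stationary point w ∈ Δ_{N,2ε} of f — that is, every w ∈ Δ_{N,2ε} for which there exists a unit vector u with uᵀΣ_w u = ‖Σ_w‖₂ and (∇_w F(w,u))ᵀ(w̃ − w) ≥ 0 for all w̃ ∈ Δ_{N,2ε} — satisfies ‖μ_w − μ*‖₂ < c₂ ε √(ln(1/ε)). -/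

import Mathlib

open Matrix Finset RealInnerProductSpace

/-- Euclidean (ℓ²) norm of a vector in `Fin n → ℝ`. -/
noncomputable def vnorm {n : ℕ} (v : Fin n → ℝ) : ℝ := Real.sqrt (∑ i, v i ^ 2)

/-- Spectral norm (ℓ²-operator norm) of a matrix. -/
noncomputable def specNorm {m n : ℕ} (A : Matrix (Fin m) (Fin n) ℝ) : ℝ :=
  ‖LinearMap.toContinuousLinearMap (Matrix.toEuclideanLin A)‖

/-- Largest eigenvalue of a symmetric matrix, as the supremum of the Rayleigh quotient
over the unit sphere. -/
noncomputable def lambdaMax {n : ℕ} (A : Matrix (Fin n) (Fin n) ℝ) : ℝ :=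
  sSup {r | ∃ v : Fin n → ℝ, vnorm v = 1 ∧ r = v ⬝ᵥ A.mulVec v}

/-- Weighted empirical mean `μ_w = X w`. -/
noncomputable def muW {d N : ℕ} (X : Matrix (Fin d) (Fin N) ℝ) (w : Fin N → ℝ) : Fin d → ℝ :=
  X.mulVec w

/-- Weighted empirical covariance `Σ_w = ∑ i, w_i (X_i - μ_w)(X_i - μ_w)ᵀ`. -/
noncomputable def covW {d N : ℕ} (X : Matrix (Fin d) (Fin N) ℝ) (w : Fin N → ℝ) :
    Matrix (Fin d) (Fin d) ℝ :=
  ∑ i : Fin N, w i • Matrix.vecMulVec (Xᵀ i - X.mulVec w) (Xᵀ i - X.mulVec w)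

/-- The constraint set `Δ_{N,ε}`. -/
def deltaSet (N : ℕ) (ε : ℝ) : Set (Fin N → ℝ) :=
  {w | (∑ i, w i) = 1 ∧ ∀ i, 0 ≤ w i ∧ w i ≤ 1 / ((1 - ε) * N)}

/-- Gradient in `w` of `F(w,u) = uᵀ Σ_w u`: the `i`-th coordinate is
`(X_iᵀu)² − 2(uᵀXw)(X_iᵀu)`. -/
noncomputable def gradFw {d N : ℕ} (X : Matrix (Fin d) (Fin N) ℝ) (w : Fin N → ℝ)
    (u : Fin d → ℝ) : Fin N → ℝ :=
  fun i => (Xᵀ i ⬝ᵥ u) ^ 2 - 2 * (u ⬝ᵥ X.mulVec w) * (Xᵀ i ⬝ᵥ u)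

/-- The matrix `Y = exp(ρ Σ_w) / tr(exp(ρ Σ_w))`. -/
noncomputable def ymat {d N : ℕ} (X : Matrix (Fin d) (Fin N) ℝ) (ρ : ℝ) (w : Fin N → ℝ) :
    Matrix (Fin d) (Fin d) ℝ :=
  ((NormedSpace.exp (ρ • covW X w)).trace)⁻¹ • NormedSpace.exp (ρ • covW X w)

/-- The softmax objective `f(w) = (1/ρ) ln tr exp(ρ Σ_w)`. -/
noncomputable def smaxObj {d N : ℕ} (X : Matrix (Fin d) (Fin N) ℝ) (ρ : ℝ) (w : Fin N → ℝ) : ℝ :=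
  (1 / ρ) * Real.log (NormedSpace.exp (ρ • covW X w)).trace

/-- Gradient of the softmax objective: `∇f(w)_i = X_iᵀ Y X_i − 2 X_iᵀ Y μ_w`. -/
noncomputable def gradSmax {d N : ℕ} (X : Matrix (Fin d) (Fin N) ℝ) (ρ : ℝ) (w : Fin N → ℝ) :
    Fin N → ℝ :=
  fun i => Xᵀ i ⬝ᵥ (ymat X ρ w).mulVec (Xᵀ i) - 2 * (Xᵀ i ⬝ᵥ (ymat X ρ w).mulVec (muW X w))

/-- Matrix logarithm of a symmetric matrix, via the spectral theorem (junk value `0` on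
non-Hermitian input). -/
noncomputable def matLog {n : ℕ} (Y : Matrix (Fin n) (Fin n) ℝ) : Matrix (Fin n) (Fin n) ℝ :=
  if h : Y.IsHermitian then h.cfc Real.log else 0

/-!
Suppose `δ = ‖μ_w − μ*‖ ≥ c₂ ε √ln(1/ε)`, so that stability gives `λ_max(Σ_w) ≥ 1 + c₄ δ² / ε`.
Let `u` be the top eigenvector at `w`. Testing stationarity against the uniform weights `v` on the
good set `G` (which lie in `Δ_{N,2ε}` since `|G| = (1 − ε) N`) gives
`uᵀ Σ_w u ≤ ∑ vᵢ ((Xᵢ − μ_w)ᵀ u)²`. Splitting `Xᵢ − μ_w = (Xᵢ − μ*) + (μ* − μ_w)`, the concentration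
condition and Minkowski's inequality bound this by `(√(1 + c₁ ε ln(1/ε)) + δ)²`, which is smaller
than `1 + c₄ δ² / ε` because `δ ≥ ε √ln(1/ε)`, `c₄ ≥ max(100, 50 c₁)` and `ε ≤ 1/100`.
-/
namespace RobustMean

variable {m n : ℕ}

lemma vnorm_sq (v : Fin n → ℝ) : vnorm v ^ 2 = ∑ i, v i ^ 2 :=
  Real.sq_sqrt (Finset.sum_nonneg fun i _ => sq_nonneg (v i))

lemma vnorm_eq_norm_toLp (v : Fin n → ℝ) :
    vnorm v = ‖(WithLp.toLp 2 v : EuclideanSpace ℝ (Fin n))‖ := by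
  simp [vnorm, EuclideanSpace.norm_eq]

lemma vnorm_sub_comm (a b : Fin n → ℝ) : vnorm (a - b) = vnorm (b - a) := by
  rw [vnorm_eq_norm_toLp, vnorm_eq_norm_toLp, WithLp.toLp_sub, WithLp.toLp_sub, norm_sub_rev]

lemma abs_dotProduct_le_vnorm_mul_vnorm (a b : Fin n → ℝ) :
    |a ⬝ᵥ b| ≤ vnorm a * vnorm b := by
  rw [vnorm_eq_norm_toLp, vnorm_eq_norm_toLp, dotProduct_comm]
  exact abs_real_inner_le_norm (WithLp.toLp 2 a) (WithLp.toLp 2 b)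

lemma vnorm_mulVec_le (A : Matrix (Fin m) (Fin n) ℝ) (v : Fin n → ℝ) :
    vnorm (A *ᵥ v) ≤ specNorm A * vnorm v := by
  rw [vnorm_eq_norm_toLp, vnorm_eq_norm_toLp]
  exact (LinearMap.toContinuousLinearMap (Matrix.toEuclideanLin A)).le_opNorm _

lemma abs_dotProduct_mulVec_le_specNorm (A : Matrix (Fin n) (Fin n) ℝ) (u : Fin n → ℝ) :
    |u ⬝ᵥ A *ᵥ u| ≤ specNorm A * vnorm u ^ 2 :=
  calc |u ⬝ᵥ A *ᵥ u| ≤ vnorm u * vnorm (A *ᵥ u) := abs_dotProduct_le_vnorm_mul_vnorm _ _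
    _ ≤ vnorm u * (specNorm A * vnorm u) := by
        gcongr
        · exact Real.sqrt_nonneg _
        · exact vnorm_mulVec_le A u
    _ = specNorm A * vnorm u ^ 2 := by ring

lemma lambdaMax_le_specNorm (A : Matrix (Fin n) (Fin n) ℝ) : lambdaMax A ≤ specNorm A := by
  refine Real.sSup_le ?_ (norm_nonneg _)
  rintro _ ⟨v, hv, rfl⟩
  simpa [hv] using (le_abs_self _).trans (abs_dotProduct_mulVec_le_specNorm A v)

lemma dotProduct_mulVec_le_one_add_specNorm_sub_one (A : Matrix (Fin n) (Fin n) ℝ)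
    {u : Fin n → ℝ} (hu : vnorm u = 1) : u ⬝ᵥ A *ᵥ u ≤ 1 + specNorm (A - 1) := by
  have hu' : u ⬝ᵥ u = 1 := by simpa [dotProduct, sq, hu] using (vnorm_sq u).symm
  have h := (le_abs_self _).trans (abs_dotProduct_mulVec_le_specNorm (A - 1) u)
  rw [Matrix.sub_mulVec, Matrix.one_mulVec, dotProduct_sub, hu', hu] at h
  linarith

lemma dotProduct_sum_smul_vecMulVec_mulVec {ι : Type*} (s : Finset ι) (c : ι → ℝ)
    (z : ι → Fin n → ℝ) (u : Fin n → ℝ) :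
    u ⬝ᵥ (∑ i ∈ s, c i • vecMulVec (z i) (z i)) *ᵥ u = ∑ i ∈ s, c i * (z i ⬝ᵥ u) ^ 2 := by
  simp only [Matrix.sum_mulVec, dotProduct_sum, Matrix.smul_mulVec, vecMulVec_mulVec,
    dotProduct_smul]
  refine Finset.sum_congr rfl fun i _ => ?_
  simp [dotProduct_comm u (z i), sq]

lemma dotProduct_covW_mulVec {N : ℕ} (X : Matrix (Fin n) (Fin N) ℝ) (w : Fin N → ℝ)
    (u : Fin n → ℝ) :
    u ⬝ᵥ covW X w *ᵥ u = ∑ i, w i * ((Xᵀ i - muW X w) ⬝ᵥ u) ^ 2 :=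
  dotProduct_sum_smul_vecMulVec_mulVec _ _ _ _

lemma gradFw_eq {N : ℕ} (X : Matrix (Fin n) (Fin N) ℝ) (w : Fin N → ℝ) (u : Fin n → ℝ)
    (i : Fin N) :
    gradFw X w u i = ((Xᵀ i - muW X w) ⬝ᵥ u) ^ 2 - (u ⬝ᵥ muW X w) ^ 2 := by
  rw [gradFw, muW, sub_dotProduct, dotProduct_comm (X *ᵥ w) u]
  ring

-- The constant `(uᵀμ_w)²` of `gradFw_eq` drops out of the pairing with `v - w` since `∑ vᵢ = ∑ wᵢ`.
lemma dotProduct_covW_mulVec_le_of_stationary {N : ℕ} (X : Matrix (Fin n) (Fin N) ℝ)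
    {w v : Fin N → ℝ} (u : Fin n → ℝ) (hw : ∑ i, w i = 1) (hv : ∑ i, v i = 1)
    (hstat : 0 ≤ ∑ i, gradFw X w u i * (v i - w i)) :
    u ⬝ᵥ covW X w *ᵥ u ≤ ∑ i, v i * ((Xᵀ i - muW X w) ⬝ᵥ u) ^ 2 := by
  have hsplit : ∑ i, gradFw X w u i * (v i - w i) =
      ∑ i, v i * ((Xᵀ i - muW X w) ⬝ᵥ u) ^ 2 - ∑ i, w i * ((Xᵀ i - muW X w) ⬝ᵥ u) ^ 2
        - (u ⬝ᵥ muW X w) ^ 2 * (∑ i, v i - ∑ i, w i) := by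
    simp only [gradFw_eq, Finset.mul_sum, ← Finset.sum_sub_distrib]
    exact Finset.sum_congr rfl fun i _ => by ring
  rw [hsplit, hv, hw] at hstat
  rw [dotProduct_covW_mulVec]
  linarith

lemma sum_mul_add_sq_le {ι : Type*} (s : Finset ι) {v : ι → ℝ} (a : ι → ℝ) (b : ℝ)
    (hv₀ : ∀ i ∈ s, 0 ≤ v i) (hv₁ : ∑ i ∈ s, v i = 1) :
    ∑ i ∈ s, v i * (a i + b) ^ 2 ≤ (√(∑ i ∈ s, v i * a i ^ 2) + |b|) ^ 2 := by
  set S := ∑ i ∈ s, v i * a i ^ 2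
  set T := ∑ i ∈ s, v i * a i
  have hS : 0 ≤ S := Finset.sum_nonneg fun i hi => mul_nonneg (hv₀ i hi) (sq_nonneg _)
  have hT : T ^ 2 ≤ S := by
    simpa [hv₁] using Finset.sum_sq_le_sum_mul_sum_of_sq_le_mul s hv₀
      (fun i hi => mul_nonneg (hv₀ i hi) (sq_nonneg (a i))) fun i _ => le_of_eq (by ring)
  have hbT : b * T ≤ |b| * √S :=
    (le_abs_self _).trans <| by rw [abs_mul]; gcongr; exact Real.abs_le_sqrt hT
  have hexpand : ∑ i ∈ s, v i * (a i + b) ^ 2 = S + 2 * b * T + b ^ 2 * ∑ i ∈ s, v i := by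
    simp only [S, T, Finset.mul_sum, ← Finset.sum_add_distrib]
    exact Finset.sum_congr rfl fun i _ => by ring
  rw [hexpand, hv₁, add_sq, Real.sq_sqrt hS, sq_abs]
  linarith

noncomputable def uniformWeights {N : ℕ} (G : Finset (Fin N)) : Fin N → ℝ :=
  fun i => if i ∈ G then (G.card : ℝ)⁻¹ else 0

lemma uniformWeights_mem_deltaSet {N : ℕ} {G : Finset (Fin N)} {ε : ℝ}
    (hpos : 0 < (1 - ε) * N) (hG : (1 - ε) * N ≤ G.card) :
    uniformWeights G ∈ deltaSet N ε := by
  have hcard : (G.card : ℝ) ≠ 0 := (hpos.trans_le hG).ne'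
  refine ⟨?_, fun i => ⟨?_, ?_⟩⟩
  · simp [uniformWeights, Finset.sum_ite_mem, hcard]
  · unfold uniformWeights; split_ifs <;> positivity
  · unfold uniformWeights
    split_ifs
    · rw [one_div]; exact inv_anti₀ hpos hG
    · positivity

lemma sum_uniformWeights_mul {N : ℕ} (G : Finset (Fin N)) (f : Fin N → ℝ) :
    ∑ i, uniformWeights G i * f i = ∑ i ∈ G, uniformWeights G i * f i :=
  (Finset.sum_subset (Finset.subset_univ G) fun i _ hi => by simp [uniformWeights, hi]).symm

lemma sum_uniformWeights_mul_sq_le {N : ℕ} {G : Finset (Fin N)} {z : Fin N → Fin n → ℝ}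
    {u : Fin n → ℝ} {K : ℝ} (hu : vnorm u = 1)
    (hK : specNorm (∑ i ∈ G, uniformWeights G i • vecMulVec (z i) (z i) - 1) ≤ K) :
    ∑ i, uniformWeights G i * (z i ⬝ᵥ u) ^ 2 ≤ 1 + K := by
  rw [sum_uniformWeights_mul, ← dotProduct_sum_smul_vecMulVec_mulVec]
  linarith [dotProduct_mulVec_le_one_add_specNorm_sub_one
    (∑ i ∈ G, uniformWeights G i • vecMulVec (z i) (z i)) hu]

lemma pos_of_mem_deltaSet {N : ℕ} {ε : ℝ} {w : Fin N → ℝ} (hw : w ∈ deltaSet N ε) : 0 < N := by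
  rcases N.eq_zero_or_pos with rfl | hN
  · simpa using hw.1
  · exact hN

lemma one_le_log_one_div {ε : ℝ} (hε : 0 < ε) (hε' : ε ≤ 1 / 3) : 1 ≤ Real.log (1 / ε) := by
  rw [Real.le_log_iff_exp_le (by positivity)]
  exact Real.exp_one_lt_three.le.trans ((le_div_iff₀ hε).2 (by linarith))

lemma mul_sqrt_log_one_div_le_sqrt {ε : ℝ} (hε : 0 < ε) :
    ε * √(Real.log (1 / ε)) ≤ √ε := by
  have hlog : Real.log (1 / ε) ≤ 1 / ε := (Real.log_le_sub_one_of_pos (by positivity)).trans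
    (by linarith)
  calc ε * √(Real.log (1 / ε)) = √(ε ^ 2 * Real.log (1 / ε)) := by
        rw [Real.sqrt_mul (sq_nonneg ε), Real.sqrt_sq hε.le]
    _ ≤ √(ε ^ 2 * (1 / ε)) := by gcongr
    _ = √ε := by field_simp

lemma mul_sqrt_log_one_div_le {ε : ℝ} (hε : 0 < ε) (hε' : ε ≤ 1 / 100) :
    ε * √(Real.log (1 / ε)) ≤ 1 / 10 :=
  (mul_sqrt_log_one_div_le_sqrt hε).trans <| Real.sqrt_le_iff.2 ⟨by norm_num, by linarith⟩

lemma sqrt_one_add_add_sq_lt {ε s c₁ c₄ δ : ℝ} (hε : 0 < ε) (hs : 1 ≤ s)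
    (hεs : ε * s ≤ 1 / 10) (hc₁ : 0 ≤ c₁) (hc₄ : 100 ≤ c₄) (hc₄' : 50 * c₁ ≤ c₄)
    (hδ : ε * s ≤ δ) :
    (√(1 + c₁ * ε * s ^ 2) + δ) ^ 2 < 1 + c₄ * δ ^ 2 / ε := by
  set K := c₁ * ε * s ^ 2
  have hεs₀ : 0 < ε * s := by positivity
  have hδ₀ : 0 < δ := hεs₀.trans_le hδ
  have hK : 0 ≤ K := by positivity
  have hsqrt : √(1 + K) ≤ 1 + K := Real.sqrt_le_iff.2 ⟨by linarith, by nlinarith⟩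
  have hexpand : (√(1 + K) + δ) ^ 2 ≤ 1 + (K + 2 * δ * (1 + K) + δ ^ 2) := by
    rw [add_sq, Real.sq_sqrt (by linarith)]
    nlinarith
  refine hexpand.trans_lt (add_lt_add_right ((lt_div_iff₀ hε).2 ?_) 1)
  have hεK : ε * K = c₁ * (ε * s) ^ 2 := by ring
  have h₁ : ε * K ≤ c₁ * δ ^ 2 := by rw [hεK]; gcongr
  have h₂ : ε * K ≤ c₁ * δ / 10 := by
    rw [hεK, sq]
    nlinarith [mul_le_mul hδ hεs hεs₀.le hδ₀.le]
  have h₃ : ε ≤ δ := by nlinarith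
  have h₄ : ε ≤ 1 / 10 := by nlinarith
  have hδ₂ : 0 < δ ^ 2 := by positivity
  nlinarith [mul_le_mul_of_nonneg_left h₂ hδ₀.le, mul_le_mul_of_nonneg_left h₃ hδ₀.le,
    mul_le_mul_of_nonneg_left h₄ hδ₂.le]

end RobustMean

open RobustMean in
/-- every first-order stationary point of the spectral-norm objective
is a good solution. -/
theorem stmt_3 : ∃ ε₀ : ℝ, 0 < ε₀ ∧
    ∀ (d N : ℕ) (X : Matrix (Fin d) (Fin N) ℝ) (μs : Fin d → ℝ)
      (G B : Finset (Fin N)) (ε c₁ c₂ c₃ c₄ : ℝ),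
    Disjoint G B → G ∪ B = Finset.univ →
    (G.card : ℝ) = (1 - ε) * N → (B.card : ℝ) = ε * N →
    0 < ε → ε ≤ ε₀ →
    1 ≤ c₁ → 1 ≤ c₂ → 5 * c₁ ≤ c₃ → max 100 (max (6 * c₃) (50 * c₁)) ≤ c₄ →
    (∀ v ∈ deltaSet N (2 * ε),
      specNorm ((∑ i ∈ G, v i • Matrix.vecMulVec (Xᵀ i - μs) (Xᵀ i - μs)) - 1) ≤
        c₁ * ε * Real.log (1 / ε)) →
    (∀ v ∈ deltaSet N (2 * ε),
      c₂ * ε * Real.sqrt (Real.log (1 / ε)) ≤ vnorm (muW X v - μs) →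
      1 + c₄ * vnorm (muW X v - μs) ^ 2 / ε ≤ lambdaMax (covW X v)) →
    ∀ w ∈ deltaSet N (2 * ε),
    (∃ u : Fin d → ℝ, vnorm u = 1 ∧
      u ⬝ᵥ (covW X w).mulVec u = specNorm (covW X w) ∧
      ∀ w' ∈ deltaSet N (2 * ε), 0 ≤ ∑ i, gradFw X w u i * (w' i - w i)) →
    vnorm (muW X w - μs) < c₂ * ε * Real.sqrt (Real.log (1 / ε)) := by
  refine ⟨1 / 100, by norm_num, ?_⟩
  intro d N X μs G B ε c₁ c₂ c₃ c₄ _ _ hG _ hε hε₀ hc₁ hc₂ _ hc₄ hconc hstab w hw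
    ⟨u, hu, hu_max, hstat⟩
  by_contra! hfar
  set s := √(Real.log (1 / ε))
  set δ := vnorm (muW X w - μs)
  set v := uniformWeights G
  have hlog : 1 ≤ Real.log (1 / ε) := one_le_log_one_div hε (by linarith)
  have hs : 1 ≤ s := Real.one_le_sqrt.2 hlog
  have hεs : ε * s ≤ 1 / 10 := mul_sqrt_log_one_div_le hε hε₀
  have hN : (0 : ℝ) < N := by exact_mod_cast pos_of_mem_deltaSet hw
  have hv : v ∈ deltaSet N (2 * ε) := uniformWeights_mem_deltaSet (by nlinarith) (by nlinarith)
  have hgood : ∑ i, v i * ((Xᵀ i - μs) ⬝ᵥ u) ^ 2 ≤ 1 + c₁ * ε * s ^ 2 := by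
    rw [Real.sq_sqrt (by linarith)]
    exact sum_uniformWeights_mul_sq_le hu (hconc v hv)
  have hbias : |(μs - muW X w) ⬝ᵥ u| ≤ δ := by
    simpa [hu, vnorm_sub_comm μs] using abs_dotProduct_le_vnorm_mul_vnorm (μs - muW X w) u
  have hc₄₁ : 100 ≤ c₄ := (le_max_left _ _).trans hc₄
  have hc₄₂ : 50 * c₁ ≤ c₄ := (le_max_right _ _).trans ((le_max_right _ _).trans hc₄)
  have hδ : ε * s ≤ δ := by nlinarith [mul_pos hε (zero_lt_one.trans_le hs)]
  refine (sqrt_one_add_add_sq_lt hε hs hεs (by linarith) hc₄₁ hc₄₂ hδ).not_ge ?_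
  calc 1 + c₄ * δ ^ 2 / ε ≤ lambdaMax (covW X w) := hstab w hw hfar
    _ ≤ specNorm (covW X w) := lambdaMax_le_specNorm _
    _ = u ⬝ᵥ covW X w *ᵥ u := hu_max.symm
    _ ≤ ∑ i, v i * ((Xᵀ i - muW X w) ⬝ᵥ u) ^ 2 :=
        dotProduct_covW_mulVec_le_of_stationary X u hw.1 hv.1 (hstat v hv)
    _ = ∑ i, v i * ((Xᵀ i - μs) ⬝ᵥ u + (μs - muW X w) ⬝ᵥ u) ^ 2 := by
        simp_rw [← add_dotProduct, sub_add_sub_cancel]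
    _ ≤ (√(∑ i, v i * ((Xᵀ i - μs) ⬝ᵥ u) ^ 2) + |(μs - muW X w) ⬝ᵥ u|) ^ 2 :=
        sum_mul_add_sq_le _ _ _ (fun i _ => (hv.2 i).1) hv.1
    _ ≤ (√(1 + c₁ * ε * s ^ 2) + δ) ^ 2 := by gcongr
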